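/- Let c ∈ ℂ with Re(c) > 0 and let n ∈ ℕ. The function Ψ_n(x) := c^{1/8} H_n(c^{1/4} x) e^{−c^{1/2} x²/2} (all powers of c principal) satisfies −Ψ_n''(x) + c x² Ψ_n(x) = c^{1/2}(2n+1) Ψ_n(x) for every x ∈ ℝ, and Ψ_n ∈ L²(ℝ); hence λ_n := c^{1/2}(2n+1) is an eigenvalue of the complex harmonic oscillator H_c with eigenfunction Ψ_n. -/

import Mathlib

/-!
The Rodrigues formula identifies `H_n` with the polynomial given by `H_{n+1} = 2X H_n - H_n'`,
which satisfies `H_n' = 2n H_{n-1}` and hence the Hermite equation `H'' - 2X H' + 2n H = 0`.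
Differentiating `p(z) e^{-z²/2}` gives `(p' - X p)(z) e^{-z²/2}`, so applying this twice and using
the Hermite equation turns `φ_n(z) = H_n(z) e^{-z²/2}` into a solution of
`-φ'' + z² φ = (2n+1) φ`; the substitution `z = c^{1/4} x` rescales this into the eigenvalue
equation, since `(c^{1/4})² = c^{1/2}` and `(c^{1/4})⁴ = c`. As `Re c^{1/2} > 0`, `Ψ_n` is a
polynomial times a decaying Gaussian, hence square integrable monomial by monomial.
-/

open Complex MeasureTheory

/-- The `n`-th physicists' Hermite polynomial, as an entire function:
`H_n(z) = (-1)ⁿ e^{z²} (dⁿ/dzⁿ) e^{-z²}`. -/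
noncomputable def physHermite (n : ℕ) (z : ℂ) : ℂ :=
  (-1) ^ n * Complex.exp (z ^ 2) * iteratedDeriv n (fun w : ℂ => Complex.exp (-w ^ 2)) z

open Polynomial

noncomputable def physHermitePoly (R : Type*) [CommRing R] : ℕ → R[X]
  | 0 => 1
  | n + 1 => 2 * X * physHermitePoly R n - derivative (physHermitePoly R n)

section

variable {R : Type*} [CommRing R]

lemma physHermitePoly_succ (n : ℕ) :
    physHermitePoly R (n + 1) = 2 * X * physHermitePoly R n - derivative (physHermitePoly R n) :=
  rfl

lemma derivative_physHermitePoly_succ (n : ℕ) :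
    derivative (physHermitePoly R (n + 1)) = 2 * (n + 1 : R[X]) * physHermitePoly R n := by
  induction n with
  | zero => simp [physHermitePoly]
  | succ n ih =>
    have h := physHermitePoly_succ (R := R) n
    rw [physHermitePoly_succ (n + 1)]
    simp only [derivative_sub, derivative_mul, ih, derivative_X, derivative_ofNat,
      derivative_natCast, derivative_add, derivative_one]
    push_cast
    linear_combination (-(2 : R[X]) * (n + 1)) * h

lemma physHermitePoly_ode (n : ℕ) :
    derivative (derivative (physHermitePoly R n)) =
      2 * X * derivative (physHermitePoly R n) - 2 * (n : R[X]) * physHermitePoly R n := by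
  cases n with
  | zero => simp [physHermitePoly]
  | succ n =>
    rw [derivative_physHermitePoly_succ]
    simp only [derivative_mul, derivative_ofNat, derivative_natCast, derivative_add,
      derivative_one]
    have h := physHermitePoly_succ (R := R) n
    push_cast
    linear_combination (2 : R[X]) * (n + 1) * h

noncomputable def gaussDeriv (p : R[X]) : R[X] := derivative p - X * p

lemma gaussDeriv_gaussDeriv_physHermitePoly (n : ℕ) :
    gaussDeriv (gaussDeriv (physHermitePoly R n)) =
      (X ^ 2 - (2 * n + 1 : R[X])) * physHermitePoly R n := by
  simp only [gaussDeriv, derivative_sub, derivative_mul, derivative_X, physHermitePoly_ode]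
  ring

end

lemma iteratedDeriv_cexp_neg_sq (n : ℕ) :
    iteratedDeriv n (fun w : ℂ => cexp (-w ^ 2)) =
      fun z => (-1) ^ n * (physHermitePoly ℂ n).eval z * cexp (-z ^ 2) := by
  induction n with
  | zero => funext z; simp [physHermitePoly]
  | succ n ih =>
    funext z
    rw [iteratedDeriv_succ, ih]
    have h : HasDerivAt (fun z => (-1) ^ n * (physHermitePoly ℂ n).eval z * cexp (-z ^ 2))
        ((-1) ^ n * (derivative (physHermitePoly ℂ n)).eval z * cexp (-z ^ 2) +
          (-1) ^ n * (physHermitePoly ℂ n).eval z * (cexp (-z ^ 2) * -(2 * z))) z := by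
      simpa using (((physHermitePoly ℂ n).hasDerivAt z).const_mul ((-1 : ℂ) ^ n)).fun_mul
        ((hasDerivAt_pow 2 z).neg.cexp)
    rw [h.deriv, physHermitePoly_succ]
    simp only [eval_sub, eval_mul, eval_X, eval_ofNat]
    ring

lemma physHermite_eq_eval (n : ℕ) (z : ℂ) : physHermite n z = (physHermitePoly ℂ n).eval z := by
  rw [physHermite, iteratedDeriv_cexp_neg_sq]
  have hsign : ((-1 : ℂ) ^ n) * (-1) ^ n = 1 := by rw [← mul_pow]; norm_num
  have hexp : cexp (z ^ 2) * cexp (-z ^ 2) = 1 := by rw [← Complex.exp_add]; simp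
  linear_combination (physHermitePoly ℂ n).eval z * (hexp * (-1) ^ n * (-1) ^ n + hsign)

noncomputable def polyGaussian (p : ℂ[X]) (z : ℂ) : ℂ := p.eval z * cexp (-z ^ 2 / 2)

lemma hasDerivAt_polyGaussian (p : ℂ[X]) (z : ℂ) :
    HasDerivAt (polyGaussian p) (polyGaussian (gaussDeriv p) z) z := by
  have hq : HasDerivAt (fun w : ℂ => -w ^ 2 / 2) (-(2 * z) / 2) z := by
    simpa using (hasDerivAt_pow 2 z).neg.div_const 2
  refine ((p.hasDerivAt z).fun_mul hq.cexp).congr_deriv ?_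
  simp only [polyGaussian, gaussDeriv, eval_sub, eval_mul, eval_X]
  ring

lemma deriv_deriv_comp_mul_ofReal {f f' f'' : ℂ → ℂ} (hf : ∀ z, HasDerivAt f (f' z) z)
    (hf' : ∀ z, HasDerivAt f' (f'' z) z) (a : ℂ) (x : ℝ) :
    deriv (deriv fun y : ℝ => f (a * y)) x = a ^ 2 * f'' (a * x) := by
  have hscale : ∀ {g g' : ℂ → ℂ}, (∀ z, HasDerivAt g (g' z) z) →
      ∀ y : ℝ, HasDerivAt (fun y : ℝ => g (a * y)) (a * g' (a * y)) y := fun hg y => by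
    simpa [mul_comm] using ((hg _).comp (y : ℂ) ((hasDerivAt_id _).const_mul a)).comp_ofReal
  have h1 : deriv (fun y : ℝ => f (a * y)) = fun y : ℝ => a * f' (a * y) :=
    funext fun y => (hscale hf y).deriv
  rw [h1, ((hscale hf' x).const_mul a).deriv]
  ring

lemma memLp_two_ofReal_pow_mul_cexp_neg_mul_sq {b : ℂ} (hb : 0 < b.re) (k : ℕ) :
    MemLp (fun x : ℝ => (x : ℂ) ^ k * cexp (-b * (x : ℂ) ^ 2)) 2 := by
  rw [memLp_two_iff_integrable_sq_norm (by fun_prop)]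
  have h := integrable_rpow_mul_exp_neg_mul_sq (by linarith : 0 < 2 * b.re)
    (neg_one_lt_zero.trans_le (Nat.cast_nonneg (2 * k)))
  refine h.congr (ae_of_all _ fun x => ?_)
  simp only [Real.rpow_natCast, norm_mul, norm_pow, norm_real, Real.norm_eq_abs,
    norm_cexp_neg_mul_sq, mul_pow, ← Real.exp_nat_mul]
  have habs : (|x| ^ k) ^ 2 = x ^ (2 * k) := by
    rw [← pow_mul, mul_comm, pow_mul, sq_abs, ← pow_mul]
  rw [habs]
  push_cast
  ring_nf

lemma memLp_two_eval_mul_cexp_neg_mul_sq {b : ℂ} (hb : 0 < b.re) (p : ℂ[X]) :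
    MemLp (fun x : ℝ => p.eval (x : ℂ) * cexp (-b * (x : ℂ) ^ 2)) 2 := by
  induction p using Polynomial.induction_on' with
  | add p q hp hq =>
    convert hp.add hq using 1
    funext x
    simp [add_mul]
  | monomial k a =>
    simpa [mul_assoc] using (memLp_two_ofReal_pow_mul_cexp_neg_mul_sq hb k).const_mul a

lemma memLp_two_polyGaussian_comp_mul {a : ℂ} (ha : 0 < (a ^ 2).re) (p : ℂ[X]) :
    MemLp (fun x : ℝ => polyGaussian p (a * x)) 2 := by
  have h := memLp_two_eval_mul_cexp_neg_mul_sq (b := a ^ 2 / 2) (by simpa using ha)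
    (p.comp (C a * X))
  convert h using 2 with x
  simp only [polyGaussian, eval_comp, eval_mul, eval_C, eval_X]
  ring_nf

theorem harmonicOscillator_eigenfunction (c : ℂ) (hc : 0 < c.re) (n : ℕ) :
    (∀ x : ℝ,
      -(deriv (deriv (fun y : ℝ => c ^ ((1 : ℂ) / 8) *
          physHermite n (c ^ ((1 : ℂ) / 4) * (y : ℂ)) *
          Complex.exp (-c ^ ((1 : ℂ) / 2) * (y : ℂ) ^ 2 / 2))) x) +
        c * (x : ℂ) ^ 2 * (c ^ ((1 : ℂ) / 8) *
          physHermite n (c ^ ((1 : ℂ) / 4) * (x : ℂ)) *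
          Complex.exp (-c ^ ((1 : ℂ) / 2) * (x : ℂ) ^ 2 / 2)) =
      c ^ ((1 : ℂ) / 2) * (2 * (n : ℂ) + 1) * (c ^ ((1 : ℂ) / 8) *
          physHermite n (c ^ ((1 : ℂ) / 4) * (x : ℂ)) *
          Complex.exp (-c ^ ((1 : ℂ) / 2) * (x : ℂ) ^ 2 / 2))) ∧
    MemLp (fun x : ℝ => c ^ ((1 : ℂ) / 8) *
        physHermite n (c ^ ((1 : ℂ) / 4) * (x : ℂ)) *
        Complex.exp (-c ^ ((1 : ℂ) / 2) * (x : ℂ) ^ 2 / 2)) 2 (volume : Measure ℝ) := by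
  have hc0 : c ≠ 0 := fun h => by simp [h] at hc
  set a := c ^ ((1 : ℂ) / 4)
  have ha2 : a ^ 2 = c ^ ((1 : ℂ) / 2) := by
    rw [sq, ← cpow_add _ _ hc0]; norm_num
  have ha4 : a ^ 4 = c := by
    simpa only [a, one_div] using cpow_ofNat_inv_pow c 4
  have ha2_re : 0 < (a ^ 2).re := by
    rw [ha2, one_div, cpow_inv_two_re]
    exact Real.sqrt_pos.mpr (by linarith [norm_nonneg c])
  have hΨ : ∀ y : ℝ, c ^ ((1 : ℂ) / 8) * physHermite n (a * y) *
      cexp (-c ^ ((1 : ℂ) / 2) * (y : ℂ) ^ 2 / 2) =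
        c ^ ((1 : ℂ) / 8) * polyGaussian (physHermitePoly ℂ n) (a * y) := fun y => by
    rw [physHermite_eq_eval, polyGaussian, ← ha2]
    ring_nf
  simp only [hΨ]
  refine ⟨fun x => ?_, (memLp_two_polyGaussian_comp_mul ha2_re _).const_mul _⟩
  rw [deriv_deriv_comp_mul_ofReal (fun z => (hasDerivAt_polyGaussian _ z).const_mul _)
    (fun z => (hasDerivAt_polyGaussian _ z).const_mul _), gaussDeriv_gaussDeriv_physHermitePoly]
  simp only [polyGaussian, eval_mul, eval_sub, eval_pow, eval_X, eval_add, eval_ofNat,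
    eval_natCast, eval_one]
  rw [← ha2, ← ha4]
  ring
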